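/- (Instance of Observation 2.2: no realization of the second-way ψ-Stirling numbers for the Fibonacci sequence.) Let F : ℕ → ℚ be the Fibonacci sequence (F(0) = 0, F(1) = 1, F(n+2) = F(n+1) + F(n)). There exist no rational numbers s₀, s₁, s₂ such that F(N)² = s₀ + s₁·F(N) + s₂·F(N)·F(N−1) holds for every natural number N ≥ 1; i.e. the defining equation x_ψ^n = Σ_{k=0}^{n} S(n,k)·x_ψ^{\underline{k}} has no solution for n = 2 when ψ is the Fibonomially-extended sequence. -/
import Mathlib

/-- instance of Observation 2.2: there are no rational numbers
`s₀, s₁, s₂` such that `F(N)² = s₀ + s₁·F(N) + s₂·F(N)·F(N−1)` for every `N ≥ 1`,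
where `F` is the Fibonacci sequence; i.e. the second-way defining equation for the
ψ-Stirling numbers has no solution for `n = 2` in the Fibonomial case. -/
theorem no_fibonacci_second_way_stirling :
    ¬ ∃ s₀ s₁ s₂ : ℚ, ∀ N : ℕ, 1 ≤ N →
      ((Nat.fib N : ℚ)) ^ 2 =
        s₀ + s₁ * (Nat.fib N : ℚ) + s₂ * (Nat.fib N : ℚ) * (Nat.fib (N - 1) : ℚ) := by
  rintro ⟨s₀, s₁, s₂, h⟩
  have h1 := h 1 (by norm_num)
  have h2 := h 2 (by norm_num)
  have h3 := h 3 (by norm_num)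
  have h4 := h 4 (by norm_num)
  simp [Nat.fib] at h1 h2 h3 h4
  linarith
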